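/- arXiv:2201.04779 — 2 statements merged into one kernel-verified Lean document; each statement's English description precedes it below -/
import Mathlib

section
/- Variable-capacity optimality of matching capacity to demand (Proposition 1): Fix a horizon N, an advertisement sequence A : {1,…,N} → {L,H} and an initial reputation R_1 ∈ [0,1]. For every capacity sequence S_1,…,S_N with S_i ≥ 0 for all i, the total profit under the general-capacity dynamics is at most the total profit obtained from the same advertisement sequence and initial reputation when in every period the capacity equals the realized demand (full-fill dynamics): Π_gen(A, S, R_1) ≤ Π(A, R_1). -/
/-!
A capacity shortfall can only lower the fill rate, and with it next period's reputation. Since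
the advertisement map `frep` and the demand `dem` are monotone in reputation, induction shows
that the full-fill reputation dominates the general one in every period, hence so does demand.
A period's profit `p * min S D - c * S` is at most `(p - c) * D`, which is then at most the
full-fill period profit.
-/

noncomputable section

/-- Post-advertisement reputation map. -/
def frep (α R a : ℝ) : ℝ := R + (1 - R) * a ^ α

/-- Demand function. -/
def dem (Λ q x : ℝ) : ℝ := if 0 < x then max 0 (Λ * (1 - q / x)) else 0

/-- Full-fill reputation trajectory (0-indexed periods). -/
def rep (α w Λ q : ℝ) (A : ℕ → ℝ) (R1 : ℝ) : ℕ → ℝ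
  | 0 => R1
  | i + 1 =>
      let R' := frep α (rep α w Λ q A R1 i) (A i)
      if 0 < dem Λ q R' then (1 - w) * R' + w else R'

/-- Full-fill total profit over horizon `N`. -/
def profit (α w Λ q p c cA : ℝ) (A : ℕ → ℝ) (R1 : ℝ) (N : ℕ) : ℝ :=
  ∑ i ∈ Finset.range N,
    ((p - c) * dem Λ q (frep α (rep α w Λ q A R1 i) (A i)) - cA * A i)

/-- General-capacity reputation trajectory: capacity sequence `S`. -/
def repG (α w Λ q : ℝ) (A S : ℕ → ℝ) (R1 : ℝ) : ℕ → ℝ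
  | 0 => R1
  | i + 1 =>
      let R' := frep α (repG α w Λ q A S R1 i) (A i)
      let d := dem Λ q R'
      if 0 < d then (1 - w) * R' + w * (min (S i) d / d) else R'

/-- General-capacity total profit over horizon `N`. -/
def profitG (α w Λ q p c cA : ℝ) (A S : ℕ → ℝ) (R1 : ℝ) (N : ℕ) : ℝ :=
  ∑ i ∈ Finset.range N,
    (p * min (S i) (dem Λ q (frep α (repG α w Λ q A S R1 i) (A i)))
      - c * S i - cA * A i)

lemma dem_monotone {Λ q : ℝ} (hΛ : 0 ≤ Λ) (hq : 0 ≤ q) : Monotone (dem Λ q) := by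
  intro x y hxy
  unfold dem
  by_cases hx : 0 < x
  · have hy : 0 < y := hx.trans_le hxy
    simp only [hx, hy, if_true]
    gcongr
  · simp only [hx, if_false]
    split <;> simp

lemma frep_le_frep {α R R' a : ℝ} (ha : a ^ α ≤ 1) (hR : R ≤ R') :
    frep α R a ≤ frep α R' a := by
  unfold frep; nlinarith

lemma frep_le_one {α R a : ℝ} (ha : a ^ α ≤ 1) (hR : R ≤ 1) : frep α R a ≤ 1 := by
  unfold frep; nlinarith

lemma partialFill_update_le_fullFill_update {w x y s d e : ℝ} (hw0 : 0 ≤ w) (hw1 : w ≤ 1)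
    (hxy : x ≤ y) (hy : y ≤ 1) (hde : d ≤ e) :
    (if 0 < d then (1 - w) * x + w * (min s d / d) else x) ≤
      (if 0 < e then (1 - w) * y + w else y) := by
  by_cases hd : 0 < d
  · have hfill : min s d / d ≤ 1 := (div_le_one hd).2 (min_le_right s d)
    rw [if_pos hd, if_pos (hd.trans_le hde)]
    nlinarith
  · rw [if_neg hd]
    split_ifs <;> nlinarith

section Trajectories

variable {α w Λ q R1 : ℝ} {A : ℕ → ℝ}

lemma rep_le_one (hw1 : w ≤ 1) (hA : ∀ i, A i ^ α ≤ 1) (hR1 : R1 ≤ 1) (i : ℕ) :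
    rep α w Λ q A R1 i ≤ 1 := by
  induction i with
  | zero => exact hR1
  | succ i ih =>
    have hfrep := frep_le_one (hA i) ih
    simp only [rep]
    split_ifs <;> nlinarith

lemma repG_le_rep (hΛ : 0 ≤ Λ) (hq : 0 ≤ q) (hw0 : 0 ≤ w) (hw1 : w ≤ 1)
    (hA : ∀ i, A i ^ α ≤ 1) (hR1 : R1 ≤ 1) (S : ℕ → ℝ) (i : ℕ) :
    repG α w Λ q A S R1 i ≤ rep α w Λ q A R1 i := by
  induction i with
  | zero => exact le_rfl
  | succ i ih =>
    have hfrep := frep_le_frep (hA i) ih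
    simp only [repG, rep]
    exact partialFill_update_le_fullFill_update hw0 hw1 hfrep
      (frep_le_one (hA i) (rep_le_one hw1 hA hR1 i)) (dem_monotone hΛ hq hfrep)

end Trajectories

lemma mul_min_sub_mul_le {p c s d e : ℝ} (hc : 0 ≤ c) (hcp : c ≤ p) (hde : d ≤ e) :
    p * min s d - c * s ≤ (p - c) * e :=
  calc p * min s d - c * s ≤ (p - c) * min s d := by nlinarith [min_le_left s d]
    _ ≤ (p - c) * e := mul_le_mul_of_nonneg_left ((min_le_right s d).trans hde) (by linarith)

theorem variable_capacity_full_fill_optimal_general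
    (Λ c p cA m u α w L H R1 q : ℝ) (N : ℕ)
    (hΛ : 0 < Λ) (hc : 0 < c) (hcp : c < p)
    (hm : 0 < m) (hu : 0 ≤ u) (hqdef : q = (u + p) / m)
    (hα : 0 < α) (hw0 : 0 ≤ w) (hw1 : w ≤ 1)
    (hL0 : 0 ≤ L) (hLH : L < H) (hH1 : H ≤ 1)
    (A : ℕ → ℝ) (hA : ∀ i, A i = L ∨ A i = H)
    (hR11 : R1 ≤ 1)
    (S : ℕ → ℝ) :
    profitG α w Λ q p c cA A S R1 N ≤ profit α w Λ q p c cA A R1 N := by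
  have hq : 0 ≤ q := hqdef ▸ div_nonneg (by linarith) hm.le
  have hApow : ∀ i, A i ^ α ≤ 1 := fun i => by
    rcases hA i with h | h <;> rw [h] <;> exact Real.rpow_le_one (by linarith) (by linarith) hα.le
  unfold profitG profit
  gcongr with i
  have hdem := dem_monotone hΛ.le hq
    (frep_le_frep (hApow i) (repG_le_rep hΛ.le hq hw0 hw1 hApow hR11 S i))
  linarith [mul_min_sub_mul_le (s := S i) hc.le hcp.le hdem]

/-- Proposition 1: under variable capacity, matching capacity to demand
(full-fill dynamics) dominates any capacity sequence. -/
theorem variable_capacity_full_fill_optimal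
    (Λ c p cA m u α w L H R1 q : ℝ) (N : ℕ)
    (hΛ : 0 < Λ) (hc : 0 < c) (hcp : c < p) (hcA : 0 ≤ cA)
    (hm : 0 < m) (hu : 0 ≤ u) (hqdef : q = (u + p) / m) (hq1 : q < 1)
    (hα : 0 < α) (hw0 : 0 ≤ w) (hw1 : w ≤ 1)
    (hL0 : 0 ≤ L) (hLH : L < H) (hH1 : H ≤ 1)
    (A : ℕ → ℝ) (hA : ∀ i, A i = L ∨ A i = H)
    (hR10 : 0 ≤ R1) (hR11 : R1 ≤ 1)
    (S : ℕ → ℝ) (hS : ∀ i, 0 ≤ S i) :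
    profitG α w Λ q p c cA A S R1 N ≤ profit α w Λ q p c cA A R1 N :=
  variable_capacity_full_fill_optimal_general Λ c p cA m u α w L H R1 q N hΛ hc hcp hm hu hqdef hα
    hw0 hw1 hL0 hLH hH1 A hA hR11 S
end
end

section
/- Proposition 2 (single switching point for the aware firm under variable capacity): For every horizon N and initial reputation R_1 ∈ [0,1], there exists k with 0 ≤ k ≤ N such that the single-switch advertisement sequence A^k defined by A^k_i = H for i ≤ k and A^k_i = L for k < i ≤ N maximizes the full-fill total profit Π(·, R_1) over all advertisement sequences in {L,H}^N. In particular, the maximum is attained by a sequence in which no high-level advertisement ever follows a low-level advertisement. -/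
noncomputable section

/-!
Since `1 - frep α R a = (1 - R) * (1 - a ^ α)` and a period with positive demand multiplies
`1 - R` by a further factor `1 - w`, two consecutive advertisement levels commute, except for
whether the first of them triggers the `w`-update. Putting the higher level first can only trigger
it earlier, so swapping an adjacent pair `L, H` into `H, L` raises the demand in both periods and,
the update being monotone, every later reputation, while the advertisement costs are unchanged.
Bubble-sorting an arbitrary sequence by such swaps ends at a sequence `H^k L^(N-k)`, and the best
of these `N + 1` sequences is optimal.
-/

open Finset

namespace VariableCapacity

def fullFillUpdate (Λ q w x : ℝ) : ℝ := if 0 < dem Λ q x then (1 - w) * x + w else x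

theorem rep_succ (α w Λ q : ℝ) (A : ℕ → ℝ) (R1 : ℝ) (i : ℕ) :
    rep α w Λ q A R1 (i + 1) = fullFillUpdate Λ q w (frep α (rep α w Λ q A R1 i) (A i)) :=
  rfl

theorem dem_mono {Λ q : ℝ} (hΛ : 0 ≤ Λ) (hq : 0 ≤ q) : Monotone (dem Λ q) := by
  intro x y hxy
  unfold dem
  split_ifs with hx hy hy
  · gcongr
  · exact absurd (hx.trans_le hxy) hy
  · exact le_max_left _ _
  · exact le_rfl

section Reputation

variable {α w Λ q R S a b x y : ℝ}

theorem frep_le_one (hα : 0 ≤ α) (ha0 : 0 ≤ a) (ha1 : a ≤ 1) (hR : R ≤ 1) : frep α R a ≤ 1 := by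
  have := Real.rpow_le_one ha0 ha1 hα
  unfold frep
  nlinarith

theorem frep_mono_left (hα : 0 ≤ α) (ha0 : 0 ≤ a) (ha1 : a ≤ 1) (hRS : R ≤ S) :
    frep α R a ≤ frep α S a := by
  have := Real.rpow_le_one ha0 ha1 hα
  unfold frep
  nlinarith

theorem frep_mono_right (hα : 0 ≤ α) (ha0 : 0 ≤ a) (hab : a ≤ b) (hR : R ≤ 1) :
    frep α R a ≤ frep α R b := by
  have := Real.rpow_le_rpow ha0 hab hα
  unfold frep
  nlinarith

theorem fullFillUpdate_le_one (hw1 : w ≤ 1) (hx : x ≤ 1) : fullFillUpdate Λ q w x ≤ 1 := by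
  unfold fullFillUpdate
  split_ifs <;> nlinarith

theorem fullFillUpdate_mono (hΛ : 0 ≤ Λ) (hq : 0 ≤ q) (hw0 : 0 ≤ w) (hw1 : w ≤ 1)
    (hxy : x ≤ y) (hy : y ≤ 1) : fullFillUpdate Λ q w x ≤ fullFillUpdate Λ q w y := by
  unfold fullFillUpdate
  split_ifs with hx hy
  · nlinarith
  · exact absurd (hx.trans_le (dem_mono hΛ hq hxy)) hy
  · nlinarith
  · exact hxy

theorem frep_fullFillUpdate_le_swap (hΛ : 0 ≤ Λ) (hq : 0 ≤ q) (hα : 0 ≤ α) (hw0 : 0 ≤ w)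
    (hR : R ≤ 1) (ha0 : 0 ≤ a) (hab : a ≤ b) (hb1 : b ≤ 1) :
    frep α (fullFillUpdate Λ q w (frep α R a)) b ≤ frep α (fullFillUpdate Λ q w (frep α R b)) a := by
  have hab' := Real.rpow_le_rpow ha0 hab hα
  have hb1' := Real.rpow_le_one (ha0.trans hab) hb1 hα
  have hxy := frep_mono_right hα ha0 hab hR
  unfold fullFillUpdate
  split_ifs with hx hy
  · unfold frep; apply le_of_eq; ring
  · exact absurd (hx.trans_le (dem_mono hΛ hq hxy)) hy
  · -- the right side exceeds the left by `w (1 - R) (1 - a ^ α) (1 - b ^ α)`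
    unfold frep
    nlinarith [mul_nonneg (mul_nonneg (mul_nonneg hw0 (sub_nonneg.2 hR))
      (sub_nonneg.2 (hab'.trans hb1'))) (sub_nonneg.2 hb1')]
  · unfold frep; apply le_of_eq; ring

end Reputation

section Trajectory

variable {α w Λ q : ℝ} {A B : ℕ → ℝ} {R1 S1 : ℝ}

theorem rep_congr {n : ℕ} (h : ∀ i < n, A i = B i) :
    rep α w Λ q A R1 n = rep α w Λ q B R1 n := by
  induction n with
  | zero => rfl
  | succ n ih => rw [rep_succ, rep_succ, ih fun i hi => h i (by omega), h n (by omega)]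

theorem rep_le_one (hα : 0 ≤ α) (hw1 : w ≤ 1) (hA : ∀ i, A i ∈ Set.Icc (0 : ℝ) 1)
    (hR1 : R1 ≤ 1) (n : ℕ) : rep α w Λ q A R1 n ≤ 1 := by
  induction n with
  | zero => exact hR1
  | succ n ih => exact fullFillUpdate_le_one hw1 (frep_le_one hα (hA n).1 (hA n).2 ih)

theorem rep_le_rep_of_eq_from {m n : ℕ} (hΛ : 0 ≤ Λ) (hq : 0 ≤ q) (hα : 0 ≤ α) (hw0 : 0 ≤ w)
    (hw1 : w ≤ 1) (hB : ∀ i, B i ∈ Set.Icc (0 : ℝ) 1) (hS1 : S1 ≤ 1)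
    (hAB : ∀ i, m ≤ i → A i = B i) (hm : rep α w Λ q A R1 m ≤ rep α w Λ q B S1 m)
    (hmn : m ≤ n) : rep α w Λ q A R1 n ≤ rep α w Λ q B S1 n := by
  induction n, hmn using Nat.le_induction with
  | base => exact hm
  | succ n hmn ih =>
    rw [rep_succ, rep_succ, hAB n hmn]
    exact fullFillUpdate_mono hΛ hq hw0 hw1 (frep_mono_left hα (hB n).1 (hB n).2 ih)
      (frep_le_one hα (hB n).1 (hB n).2 (rep_le_one hα hw1 hB hS1 n))

end Trajectory

theorem sum_range_le_sum_range_of_pair {M : Type*} [AddCommMonoid M] [PartialOrder M]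
    [IsOrderedAddMonoid M] {f g : ℕ → M} {j N : ℕ} (hj : j + 1 < N)
    (hlt : ∀ i < j, f i ≤ g i) (hpair : f j + f (j + 1) ≤ g j + g (j + 1))
    (hgt : ∀ i, j + 2 ≤ i → i < N → f i ≤ g i) :
    ∑ i ∈ range N, f i ≤ ∑ i ∈ range N, g i := by
  obtain ⟨n, rfl⟩ : ∃ n, N = j + 2 + n := ⟨N - (j + 2), by omega⟩
  rw [sum_range_add f, sum_range_add g, sum_range_succ f (j + 1), sum_range_succ g (j + 1),
    sum_range_succ f, sum_range_succ g, add_assoc _ (f j), add_assoc _ (g j)]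
  gcongr with i hi i hi
  · exact hlt i (mem_range.1 hi)
  · exact hgt _ (by omega) (by have := mem_range.1 hi; omega)

section Profit

variable {α w Λ q p c cA R1 : ℝ} {A B : ℕ → ℝ} {N : ℕ}

theorem profit_congr (h : ∀ i < N, A i = B i) :
    profit α w Λ q p c cA A R1 N = profit α w Λ q p c cA B R1 N := by
  unfold profit
  refine sum_congr rfl fun i hi => ?_
  rw [rep_congr fun t ht => h t (ht.trans (mem_range.1 hi)), h i (mem_range.1 hi)]

theorem profit_le_profit_comp_swap (hΛ : 0 ≤ Λ) (hq : 0 ≤ q) (hcp : c ≤ p) (hα : 0 ≤ α)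
    (hw0 : 0 ≤ w) (hw1 : w ≤ 1) (hA : ∀ i, A i ∈ Set.Icc (0 : ℝ) 1) (hR1 : R1 ≤ 1) {j : ℕ}
    (hj : j + 1 < N) (hasc : A j ≤ A (j + 1)) :
    profit α w Λ q p c cA A R1 N ≤ profit α w Λ q p c cA (A ∘ Equiv.swap j (j + 1)) R1 N := by
  set B := A ∘ Equiv.swap j (j + 1)
  have hBj : B j = A (j + 1) := by simp [B]
  have hBj1 : B (j + 1) = A j := by simp [B]
  have hBA : ∀ i, i ≠ j → i ≠ j + 1 → B i = A i := fun i h1 h2 => by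
    simp [B, Equiv.swap_apply_of_ne_of_ne h1 h2]
  have hB : ∀ i, B i ∈ Set.Icc (0 : ℝ) 1 := fun i => hA _
  have hpc : 0 ≤ p - c := sub_nonneg.2 hcp
  have hrep_le : ∀ i ≤ j, rep α w Λ q B R1 i = rep α w Λ q A R1 i := fun i hi =>
    rep_congr fun t ht => hBA t (by omega) (by omega)
  set R := rep α w Λ q A R1 j
  have hR : R ≤ 1 := rep_le_one hα hw1 hA hR1 j
  have hswap := frep_fullFillUpdate_le_swap hΛ hq hα hw0 hR (hA j).1 hasc (hA (j + 1)).2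
  have hrep_ge : ∀ i, j + 2 ≤ i → rep α w Λ q A R1 i ≤ rep α w Λ q B R1 i := by
    refine fun i hi => rep_le_rep_of_eq_from hΛ hq hα hw0 hw1 hB hR1
      (fun t ht => (hBA t (by omega) (by omega)).symm) ?_ hi
    rw [rep_succ, rep_succ, rep_succ, rep_succ, hrep_le j le_rfl, hBj, hBj1]
    exact fullFillUpdate_mono hΛ hq hw0 hw1 hswap <| frep_le_one hα (hA j).1 (hA j).2 <|
      fullFillUpdate_le_one hw1 (frep_le_one hα (hA (j + 1)).1 (hA (j + 1)).2 hR)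
  unfold profit
  apply sum_range_le_sum_range_of_pair hj
  · intro i hi
    rw [hrep_le i hi.le, hBA i (by omega) (by omega)]
  · rw [rep_succ, rep_succ, hrep_le j le_rfl, hBj, hBj1]
    have hd1 := dem_mono hΛ hq (frep_mono_right hα (hA j).1 hasc hR)
    have hd2 := dem_mono hΛ hq hswap
    linarith [mul_le_mul_of_nonneg_left hd1 hpc, mul_le_mul_of_nonneg_left hd2 hpc]
  · intro i hi _
    rw [hBA i (by omega) (by omega)]
    have := dem_mono hΛ hq (frep_mono_left hα (hA i).1 (hA i).2 (hrep_ge i hi))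
    linarith [mul_le_mul_of_nonneg_left this hpc]

end Profit

section Switching

variable {γ : Type*} {L H : γ} {A : ℕ → γ}

theorem exists_eq_switch_of_not_ascending (hA : ∀ i, A i = L ∨ A i = H) (N : ℕ)
    (hsorted : ∀ j, j + 1 < N → A j = L → A (j + 1) ≠ H) :
    ∃ k ≤ N, ∀ i < N, A i = if i < k then H else L := by
  induction N with
  | zero => exact ⟨0, le_rfl, fun i hi => absurd hi (Nat.not_lt_zero i)⟩
  | succ N ih =>
    obtain ⟨k, hkN, hk⟩ := ih fun j hj => hsorted j (by omega)
    rcases hA N with hN | hN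
    · refine ⟨k, by omega, fun i hi => ?_⟩
      rcases (Nat.lt_succ_iff.1 hi).lt_or_eq with hi | rfl
      · exact hk i hi
      · rw [if_neg (by omega), hN]
    · rcases hkN.lt_or_eq with hkN | rfl
      · have hlast : A (N - 1) = L := by rw [hk _ (by omega), if_neg (by omega)]
        exact absurd (by rwa [Nat.sub_add_cancel (by omega)] : A (N - 1 + 1) = H)
          (hsorted _ (by omega) hlast)
      · refine ⟨k + 1, le_rfl, fun i hi => ?_⟩
        rcases (Nat.lt_succ_iff.1 hi).lt_or_eq with hi | rfl
        · rw [hk i hi, if_pos hi, if_pos (by omega)]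
        · rw [if_pos (by omega), hN]

def highWeight [DecidableEq γ] (H : γ) (N : ℕ) (A : ℕ → γ) : ℕ :=
  ∑ i ∈ range N, if A i = H then i else 0

theorem highWeight_comp_swap_lt [DecidableEq γ] (hLH : L ≠ H) {j N : ℕ} (hj : j + 1 < N)
    (hAj : A j = L) (hAj1 : A (j + 1) = H) :
    highWeight H N (A ∘ Equiv.swap j (j + 1)) < highWeight H N A := by
  set σ := Equiv.swap j (j + 1)
  have hreindex : highWeight H N (A ∘ σ) = ∑ i ∈ range N, if A i = H then σ i else 0 := by
    rw [← Equiv.Perm.sum_comp σ (range N) (fun i => if A i = H then σ i else 0)]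
    · simp [highWeight, σ]
    · intro i hi
      rw [coe_range, Set.mem_Iio]
      rcases Equiv.eq_or_eq_of_swap_apply_ne_self hi with rfl | rfl <;> omega
  rw [hreindex]
  refine sum_lt_sum (fun i _ => ?_) ⟨j + 1, mem_range.2 hj, by simp [σ, hAj1]⟩
  split_ifs with h
  · have hij : i ≠ j := by rintro rfl; exact hLH (hAj.symm.trans h)
    rw [Equiv.swap_apply_def, if_neg hij]
    split_ifs <;> omega
  · exact le_rfl

theorem exists_le_switch {β : Type*} [Preorder β] (hLH : L ≠ H) {N : ℕ} {F : (ℕ → γ) → β}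
    (hF : ∀ A B, (∀ i < N, A i = B i) → F A = F B)
    (hswap : ∀ A, (∀ i, A i = L ∨ A i = H) → ∀ j, j + 1 < N → A j = L → A (j + 1) = H →
      F A ≤ F (A ∘ Equiv.swap j (j + 1)))
    (hA : ∀ i, A i = L ∨ A i = H) : ∃ k ≤ N, F A ≤ F fun i => if i < k then H else L := by
  classical
  obtain ⟨μ, hμ⟩ : ∃ μ, highWeight H N A = μ := ⟨_, rfl⟩
  induction μ using Nat.strong_induction_on generalizing A with
  | _ μ ih =>
    by_cases hasc : ∃ j, j + 1 < N ∧ A j = L ∧ A (j + 1) = H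
    · obtain ⟨j, hj, hAj, hAj1⟩ := hasc
      obtain ⟨k, hk, hle⟩ := ih _ (hμ ▸ highWeight_comp_swap_lt hLH hj hAj hAj1)
        (fun i => hA _) rfl
      exact ⟨k, hk, (hswap A hA j hj hAj hAj1).trans hle⟩
    · push Not at hasc
      obtain ⟨k, hk, hAk⟩ := exists_eq_switch_of_not_ascending hA N hasc
      exact ⟨k, hk, (hF _ _ hAk).le⟩

theorem exists_switch_forall_le {β : Type*} [LinearOrder β] (hLH : L ≠ H) {N : ℕ}
    {F : (ℕ → γ) → β} (hF : ∀ A B, (∀ i < N, A i = B i) → F A = F B)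
    (hswap : ∀ A, (∀ i, A i = L ∨ A i = H) → ∀ j, j + 1 < N → A j = L → A (j + 1) = H →
      F A ≤ F (A ∘ Equiv.swap j (j + 1))) :
    ∃ k ≤ N, ∀ A, (∀ i, A i = L ∨ A i = H) → F A ≤ F fun i => if i < k then H else L := by
  obtain ⟨k, hk, hmax⟩ := exists_max_image (range (N + 1))
    (fun k => F fun i => if i < k then H else L) ⟨0, mem_range.2 N.succ_pos⟩
  refine ⟨k, Nat.lt_succ_iff.1 (mem_range.1 hk), fun A hA => ?_⟩
  obtain ⟨k', hk', hle⟩ := exists_le_switch hLH hF hswap hA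
  exact hle.trans (hmax k' (mem_range.2 (Nat.lt_succ_of_le hk')))

end Switching

end VariableCapacity

open VariableCapacity in
theorem single_switching_point_variable_capacity_general
    (Λ c p cA m u α w L H q : ℝ) (N : ℕ)
    (hΛ : 0 < Λ) (hc : 0 < c) (hcp : c < p)
    (hm : 0 < m) (hu : 0 ≤ u) (hqdef : q = (u + p) / m)
    (hα : 0 < α) (hw0 : 0 ≤ w) (hw1 : w ≤ 1)
    (hL0 : 0 ≤ L) (hLH : L < H) (hH1 : H ≤ 1)
    (R1 : ℝ) (hR11 : R1 ≤ 1) :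
    ∃ k ≤ N, ∀ A : ℕ → ℝ, (∀ i, A i = L ∨ A i = H) →
      profit α w Λ q p c cA A R1 N ≤
        profit α w Λ q p c cA (fun i => if i < k then H else L) R1 N := by
  have hq : 0 ≤ q := hqdef ▸ div_nonneg (by linarith) hm.le
  refine exists_switch_forall_le hLH.ne (fun A B h => profit_congr h)
    fun A hA j hj hAj hAj1 => ?_
  have hA01 : ∀ i, A i ∈ Set.Icc (0 : ℝ) 1 := fun i => by
    rcases hA i with h | h <;> rw [h] <;> constructor <;> linarith
  exact profit_le_profit_comp_swap hΛ.le hq hcp.le hα.le hw0 hw1 hA01 hR11 hj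
    (by rw [hAj, hAj1]; exact hLH.le)

/-- Proposition 2: under variable capacity the aware firm has an optimal
advertisement sequence with a single switching point: `H` in the first `k`
periods and `L` afterwards, for some `0 ≤ k ≤ N`. -/
theorem single_switching_point_variable_capacity
    (Λ c p cA m u α w L H q : ℝ) (N : ℕ)
    (hΛ : 0 < Λ) (hc : 0 < c) (hcp : c < p) (hcA : 0 ≤ cA)
    (hm : 0 < m) (hu : 0 ≤ u) (hqdef : q = (u + p) / m) (hq1 : q < 1)
    (hα : 0 < α) (hw0 : 0 ≤ w) (hw1 : w ≤ 1)
    (hL0 : 0 ≤ L) (hLH : L < H) (hH1 : H ≤ 1)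
    (R1 : ℝ) (hR10 : 0 ≤ R1) (hR11 : R1 ≤ 1) :
    ∃ k ≤ N, ∀ A : ℕ → ℝ, (∀ i, A i = L ∨ A i = H) →
      profit α w Λ q p c cA A R1 N ≤
        profit α w Λ q p c cA (fun i => if i < k then H else L) R1 N :=
  single_switching_point_variable_capacity_general Λ c p cA m u α w L H q N hΛ hc hcp hm hu hqdef hα
    hw0 hw1 hL0 hLH hH1 R1 hR11
end
end
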